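/- arXiv:2505.05425 — 8 statements merged into one kernel-verified Lean document; each statement's English description precedes it below -/
import Mathlib

section
/- Let B be a differentiation basis in a metric measure space 𝕏 = (X, ρ, μ), and define diff(B) := {p ∈ [1,∞] : B differentiates L^p(𝕏)}. If 𝕏 is complete, then there exists p₀ ∈ [1,∞) such that diff(B) equals one of the following six sets: ∅, {∞}, [p₀,∞], (p₀,∞], [p₀,∞), (p₀,∞). -/
open MeasureTheory Filter Metric Topology ENNReal

section Framework

variable {X : Type*} [MetricSpace X] [MeasurableSpace X] (μ : MeasureTheory.Measure X)

/-- A sequence of sets `S : ℕ → Set X` *contracts to* `x` with respect to the family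
assignment `Bx`: every `S n` belongs to `Bx x` and `S n ⊆ B(x, r n)` for some radii
`r n → 0`. -/
def ContractsTo (Bx : X → Set (Set X)) (x : X) (S : ℕ → Set X) : Prop :=
  (∀ n, S n ∈ Bx x) ∧
  ∃ r : ℕ → ℝ, Tendsto r atTop (𝓝 0) ∧ ∀ n, S n ⊆ Metric.ball x (r n)

/-- A differentiation basis in a metric measure space: for every `x`, a family `sets x` of
measurable sets containing `x` with finite positive measure, such that almost every point
admits a sequence contracting to it. -/
structure DiffBasis where
  sets : X → Set (Set X)
  measurableSet' : ∀ x, ∀ S ∈ sets x, MeasurableSet S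
  mem_of_mem : ∀ x, ∀ S ∈ sets x, x ∈ S
  measure_pos : ∀ x, ∀ S ∈ sets x, 0 < μ S
  measure_lt_top : ∀ x, ∀ S ∈ sets x, μ S < ⊤
  ae_contracts : ∀ᵐ x ∂μ, ∃ S : ℕ → Set X, ContractsTo sets x S

namespace DiffBasis

variable {μ}

/-- The whole family `B = ⋃ₓ B(x)`. -/
def family (B : DiffBasis μ) : Set (Set X) := ⋃ x, B.sets x

/-- `B` is uncentered if `B(x) = {S ∈ B : x ∈ S}` for every `x`. -/
def Uncentered (B : DiffBasis μ) : Prop :=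
  ∀ x, B.sets x = {S | S ∈ B.family ∧ x ∈ S}

/-- A Busemann–Feller basis: an uncentered basis all of whose members are open. -/
def BusemannFeller (B : DiffBasis μ) : Prop :=
  B.Uncentered ∧ ∀ S ∈ B.family, IsOpen S

/-- `B` differentiates `L^p(𝕏)`: for every `f ∈ L^p`, for almost every `x`, the averages of
`f` along any sequence contracting to `x` converge to `f x`. -/
def Differentiates (B : DiffBasis μ) (p : ℝ≥0∞) : Prop :=
  ∀ f : X → ℝ, MemLp f p μ →
    ∀ᵐ x ∂μ, ∀ S : ℕ → Set X, ContractsTo B.sets x S →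
      Tendsto (fun n => ⨍ y in S n, f y ∂μ) atTop (𝓝 (f x))

/-- `diff(B) = {p ∈ [1,∞] : B differentiates L^p}`. -/
def diffSet (B : DiffBasis μ) : Set ℝ≥0∞ := {p : ℝ≥0∞ | 1 ≤ p ∧ B.Differentiates p}

end DiffBasis

end Framework

/-!
The whole content is a monotonicity property: for `p ≤ q < ∞` with `1 ≤ q`, a basis that
differentiates `L^p` differentiates `L^q`. Given `f ∈ L^q` and `c > 0`, split
`f = (f - truncate c ∘ f) + truncate c ∘ f`. The second part is bounded by `c`; the first
vanishes off `{|f| ≥ c}`, a set of finite measure by Chebyshev, so it lies in `L^p` and its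
averages converge almost everywhere. Letting `c → 0` along a sequence gives the convergence for
`f`. Hence `diff(B) ∪ {∞}` is an upper set of `[1, ∞]`, i.e. `[p₀, ∞]` or `(p₀, ∞]`, and
`diff(B)` is this interval with or without `∞`.
-/

theorem IsUpperSet.eq_Ici_sInf_or_eq_Ioi_sInf {α : Type*} [CompleteLinearOrder α] {s : Set α}
    (hs : IsUpperSet s) : s = Set.Ici (sInf s) ∨ s = Set.Ioi (sInf s) := by
  by_cases hmem : sInf s ∈ s
  · exact .inl <| Set.Subset.antisymm (fun _ ha => sInf_le ha) (hs.Ici_subset hmem)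
  · refine .inr <| Set.Subset.antisymm (fun a ha => (sInf_le ha).lt_of_ne ?_) fun a ha => ?_
    · rintro rfl; exact hmem ha
    · obtain ⟨b, hb, hba⟩ := sInf_lt_iff.mp ha
      exact hs hba.le hb

theorem ENNReal.exists_eq_interval_of_isUpperSet_insert_top {D : Set ℝ≥0∞}
    (hD1 : ∀ p ∈ D, 1 ≤ p) (hD : IsUpperSet (insert ⊤ D)) :
    ∃ p₀ : ℝ≥0∞, 1 ≤ p₀ ∧ p₀ ≠ ⊤ ∧
      (D = ∅ ∨ D = {⊤} ∨ D = Set.Icc p₀ ⊤ ∨ D = Set.Ioc p₀ ⊤ ∨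
       D = Set.Ico p₀ ⊤ ∨ D = Set.Ioo p₀ ⊤) := by
  have hDU : D = insert ⊤ D ∨ D = insert ⊤ D \ {⊤} := by
    by_cases htop : ⊤ ∈ D
    · exact .inl (Set.insert_eq_of_mem htop).symm
    · exact .inr (Set.insert_sdiff_self_of_notMem htop).symm
  obtain ⟨p₀, hp₀⟩ : ∃ p₀, sInf (insert ⊤ D) = p₀ := ⟨_, rfl⟩
  by_cases htop : p₀ = ⊤
  · have hsub : D ⊆ {⊤} := fun p hp =>
      sInf_eq_top.mp (hp₀.trans htop) p (Set.mem_insert_of_mem _ hp)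
    refine ⟨1, le_rfl, one_ne_top, ?_⟩
    rcases Set.subset_singleton_iff_eq.mp hsub with h | h <;> simp [h]
  have h1 : 1 ≤ p₀ := hp₀ ▸ le_sInf (by simpa using hD1)
  refine ⟨p₀, h1, htop, .inr <| .inr ?_⟩
  rcases hD.eq_Ici_sInf_or_eq_Ioi_sInf with hU | hU <;> rcases hDU with hDU | hDU <;>
    rw [hDU, hU, hp₀] <;>
    simp [Set.Icc_top, Set.Ioc_top, ← Set.Icc_sdiff_right, ← Set.Ioc_sdiff_right]

def truncate (c t : ℝ) : ℝ := max (-c) (min c t)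

theorem continuous_truncate (c : ℝ) : Continuous (truncate c) := by
  unfold truncate; fun_prop

theorem abs_truncate_le {c : ℝ} (hc : 0 ≤ c) (t : ℝ) : |truncate c t| ≤ c :=
  abs_le.2 ⟨le_max_left _ _, max_le (by linarith) (min_le_left _ _)⟩

theorem truncate_of_abs_le {c t : ℝ} (h : |t| ≤ c) : truncate c t = t := by
  obtain ⟨h₁, h₂⟩ := abs_le.1 h
  rw [truncate, min_eq_right h₂, max_eq_right h₁]

theorem abs_sub_truncate_le {c : ℝ} (hc : 0 ≤ c) (t : ℝ) : |t - truncate c t| ≤ |t| := by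
  unfold truncate
  rcases le_total c t with h | h
  · rw [min_eq_left h, max_eq_right (by linarith), abs_of_nonneg (by linarith),
      abs_of_nonneg (by linarith)]; linarith
  · rcases le_total t (-c) with h' | h'
    · rw [min_eq_right h, max_eq_left h', abs_of_nonpos (by linarith),
        abs_of_nonpos (by linarith)]; linarith
    · rw [min_eq_right h, max_eq_right h', sub_self, abs_zero]; exact abs_nonneg t

section

variable {X : Type*} [MeasurableSpace X] {μ : Measure X}

theorem MeasureTheory.MemLp.sub_truncate {f : X → ℝ} {p q : ℝ≥0∞} (hf : MemLp f q μ)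
    (hq0 : q ≠ 0) (hq : q ≠ ⊤) (hpq : p ≤ q) {c : ℝ} (hc : 0 < c) :
    MemLp (fun y => f y - truncate c (f y)) p μ := by
  have hfq : MemLp (fun y => f y - truncate c (f y)) q μ :=
    hf.mono ((continuous_id.sub (continuous_truncate c)).comp_aestronglyMeasurable hf.1)
      (.of_forall fun y => abs_sub_truncate_le hc.le (f y))
  refine hfq.mono_exponent_of_measure_support_ne_top (fun y hy => ?_)
    (hf.meas_ge_lt_top hq0 hq (ε := c.toNNReal) (by simpa using hc)).ne hpq
  have : |f y| ≤ c := by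
    simp only [Set.mem_ofPred_eq, not_le, ← NNReal.coe_lt_coe, coe_nnnorm,
      Real.norm_eq_abs, Real.coe_toNNReal _ hc.le] at hy
    exact hy.le
  rw [truncate_of_abs_le this, sub_self]

theorem norm_setAverage_sub_setAverage_le {E : Type*} [NormedAddCommGroup E] [NormedSpace ℝ E]
    {f g : X → E} {s : Set X} (hs : μ s ≠ ⊤) (hf : IntegrableOn f s μ) (hg : IntegrableOn g s μ)
    {C : ℝ} (hC : 0 ≤ C) (hfg : ∀ y ∈ s, ‖f y - g y‖ ≤ C) :
    ‖⨍ y in s, f y ∂μ - ⨍ y in s, g y ∂μ‖ ≤ C := by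
  rw [setAverage_eq, setAverage_eq, ← smul_sub, ← integral_sub hf hg, norm_smul,
    Real.norm_of_nonneg (by positivity)]
  calc (μ.real s)⁻¹ * ‖∫ y in s, f y - g y ∂μ‖ ≤ (μ.real s)⁻¹ * (C * μ.real s) := by
        gcongr; exact norm_setIntegral_le_of_norm_le_const hs.lt_top hfg
    _ ≤ C := by
        rcases (measureReal_nonneg : 0 ≤ μ.real s).eq_or_lt with h | h
        · simp [← h, hC]
        · rw [mul_comm C, ← mul_assoc, inv_mul_cancel₀ h.ne', one_mul]

theorem tendsto_setAverage_of_uniform_approx {S : ℕ → Set X} (hS : ∀ n, μ (S n) ≠ ⊤) {x : X}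
    {f : X → ℝ} {g : ℕ → X → ℝ} {ε : ℕ → ℝ} (hε : Tendsto ε atTop (𝓝 0))
    (hfg : ∀ k y, |f y - g k y| ≤ ε k) (hf : ∀ n, IntegrableOn f (S n) μ)
    (hg : ∀ k n, IntegrableOn (g k) (S n) μ)
    (hgx : ∀ k, Tendsto (fun n => ⨍ y in S n, g k y ∂μ) atTop (𝓝 (g k x))) :
    Tendsto (fun n => ⨍ y in S n, f y ∂μ) atTop (𝓝 (f x)) := by
  rw [Metric.tendsto_atTop]
  intro δ hδ
  obtain ⟨k, hk⟩ := (hε.eventually (gt_mem_nhds (show (0 : ℝ) < δ / 3 by positivity))).exists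
  have hεk : 0 ≤ ε k := (abs_nonneg _).trans (hfg k x)
  obtain ⟨N, hN⟩ := Metric.tendsto_atTop.mp (hgx k) (δ / 3) (by positivity)
  refine ⟨N, fun n hn => ?_⟩
  have havg := norm_setAverage_sub_setAverage_le (hS n) (hf n) (hg k n) hεk
    fun y _ => hfg k y
  calc dist (⨍ y in S n, f y ∂μ) (f x)
      ≤ dist (⨍ y in S n, f y ∂μ) (⨍ y in S n, g k y ∂μ)
        + dist (⨍ y in S n, g k y ∂μ) (g k x) + dist (g k x) (f x) := dist_triangle4 _ _ _ _
    _ < δ / 3 + δ / 3 + δ / 3 := by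
        gcongr
        · exact havg.trans_lt hk
        · exact hN n hn
        · rw [dist_comm]; exact (hfg k x).trans_lt hk
    _ = δ := by ring

theorem MeasureTheory.MemLp.integrableOn_of_measure_ne_top {E : Type*} [NormedAddCommGroup E]
    {f : X → E} {q : ℝ≥0∞} (hf : MemLp f q μ) (hq1 : 1 ≤ q) {s : Set X} (hs : μ s ≠ ⊤) :
    IntegrableOn f s μ :=
  haveI : Fact (μ s < ⊤) := ⟨hs.lt_top⟩
  (hf.restrict s).integrable hq1

end

namespace DiffBasis

variable {X : Type*} [MetricSpace X] [MeasurableSpace X] {μ : Measure X}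

theorem Differentiates.mono_exponent {B : DiffBasis μ} {p q : ℝ≥0∞} (hB : B.Differentiates p)
    (hpq : p ≤ q) (hq1 : 1 ≤ q) (hq : q ≠ ⊤) : B.Differentiates q := by
  intro f hf
  have hq0 : q ≠ 0 := (zero_lt_one.trans_le hq1).ne'
  have hε : Tendsto (fun k : ℕ => 1 / ((k : ℝ) + 1)) atTop (𝓝 0) :=
    tendsto_one_div_add_atTop_nhds_zero_nat
  set g : ℕ → X → ℝ := fun k y => f y - truncate (1 / ((k : ℝ) + 1)) (f y)
  have hg : ∀ {r}, r ≤ q → ∀ k, MemLp (g k) r μ := fun hr k =>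
    hf.sub_truncate hq0 hq hr (by positivity)
  filter_upwards [ae_all_iff.2 fun k => hB (g k) (hg hpq k)] with x hx S hS
  have hSfin : ∀ n, μ (S n) ≠ ⊤ := fun n => (B.measure_lt_top x _ (hS.1 n)).ne
  refine tendsto_setAverage_of_uniform_approx hSfin hε (fun k y => ?_)
    (fun n => hf.integrableOn_of_measure_ne_top hq1 (hSfin n))
    (fun k n => (hg le_rfl k).integrableOn_of_measure_ne_top hq1 (hSfin n)) (hx · S hS)
  simpa [g] using abs_truncate_le (by positivity) (f y)

end DiffBasis

theorem statement3_general {X : Type*} [MetricSpace X] [MeasurableSpace X]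
    {μ : Measure X} (B : DiffBasis μ) :
    ∃ p₀ : ℝ≥0∞, 1 ≤ p₀ ∧ p₀ ≠ ⊤ ∧
      (B.diffSet = ∅ ∨ B.diffSet = {⊤} ∨
       B.diffSet = Set.Icc p₀ ⊤ ∨ B.diffSet = Set.Ioc p₀ ⊤ ∨
       B.diffSet = Set.Ico p₀ ⊤ ∨ B.diffSet = Set.Ioo p₀ ⊤) := by
  refine ENNReal.exists_eq_interval_of_isUpperSet_insert_top (fun p hp => hp.1) ?_
  rintro p q hpq (rfl | ⟨hp1, hp⟩)
  · exact .inl (top_le_iff.mp hpq)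
  · by_cases hq : q = ⊤
    · exact .inl hq
    · exact .inr ⟨hp1.trans hpq, hp.mono_exponent hpq (hp1.trans hpq) hq⟩

/-- **Theorem (statement 3).** Let `B` be a differentiation basis in a metric measure space
`𝕏 = (X, ρ, μ)`. If `𝕏` is complete, then `diff(B)` takes one of the six forms
`∅`, `{∞}`, `[p₀,∞]`, `(p₀,∞]`, `[p₀,∞)`, `(p₀,∞)` for some `p₀ ∈ [1,∞)`. -/
theorem statement3 {X : Type*} [MetricSpace X] [MeasurableSpace X] [OpensMeasurableSpace X]
    {μ : Measure X} (hcomplete : μ.IsComplete) (B : DiffBasis μ) :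
    ∃ p₀ : ℝ≥0∞, 1 ≤ p₀ ∧ p₀ ≠ ⊤ ∧
      (B.diffSet = ∅ ∨ B.diffSet = {⊤} ∨
       B.diffSet = Set.Icc p₀ ⊤ ∨ B.diffSet = Set.Ioc p₀ ⊤ ∨
       B.diffSet = Set.Ico p₀ ⊤ ∨ B.diffSet = Set.Ioo p₀ ⊤) :=
  statement3_general B
end

section
/- Let B be a differentiation basis in a metric measure space 𝕏 = (X, ρ, μ), and define diff(B) := {p ∈ [1,∞] : B differentiates L^p(𝕏)}. If X is a countable union of (possibly overlapping) open sets of finite measure, then (regardless of whether 𝕏 is complete) there exists p₀ ∈ [1,∞) such that diff(B) equals one of the following four sets: ∅, {∞}, [p₀,∞], (p₀,∞]. -/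
/-!
Differentiation is local, because contracting sequences eventually lie inside any neighbourhood
of their point. On a set of finite measure `L^q ⊆ L^p` for `p ≤ q`, so if `B` differentiates
`L^p` it differentiates each localisation `(G n).indicator f` of an `f ∈ L^q`, hence `f` itself
a.e. Thus `diff(B)` is an upper set of `[1, ∞]`, and an upper set of a complete linear order is
`[s, ⊤]` or `(s, ⊤]` with `s` its infimum.
-/

open MeasureTheory Filter Metric Topology ENNReal

section Localization

variable {X : Type*} [MetricSpace X]

theorem ContractsTo.eventually_subset {Bx : X → Set (Set X)} {x : X} {S : ℕ → Set X}
    (hS : ContractsTo Bx x S) {U : Set X} (hU : U ∈ 𝓝 x) : ∀ᶠ n in atTop, S n ⊆ U := by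
  obtain ⟨-, r, hr, hSr⟩ := hS
  obtain ⟨ε, hε, hεU⟩ := Metric.mem_nhds_iff.mp hU
  filter_upwards [hr.eventually_lt_const hε] with n hn
  exact (hSr n).trans ((Metric.ball_subset_ball hn.le).trans hεU)

variable [MeasurableSpace X] {μ : Measure X}

namespace DiffBasis

theorem tendsto_setAverage_of_indicator (B : DiffBasis μ) {f : X → ℝ} {U : Set X} {x : X}
    (hU : U ∈ 𝓝 x) {S : ℕ → Set X} (hS : ContractsTo B.sets x S)
    (h : Tendsto (fun n => ⨍ y in S n, U.indicator f y ∂μ) atTop (𝓝 (U.indicator f x))) :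
    Tendsto (fun n => ⨍ y in S n, f y ∂μ) atTop (𝓝 (f x)) := by
  rw [Set.indicator_of_mem (mem_of_mem_nhds hU)] at h
  refine h.congr' ?_
  filter_upwards [hS.eventually_subset hU] with n hnU
  exact setAverage_congr_fun (B.measurableSet' x (S n) (hS.1 n))
    (.of_forall fun y hy => Set.indicator_of_mem (hnU hy) f)

variable [OpensMeasurableSpace X]

theorem Differentiates.mono {B : DiffBasis μ} (G : ℕ → Set X) (hGopen : ∀ n, IsOpen (G n))
    (hGfin : ∀ n, μ (G n) < ⊤) (hGcov : (⋃ n, G n) = Set.univ) {p q : ℝ≥0∞} (hpq : p ≤ q)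
    (hp : B.Differentiates p) : B.Differentiates q := by
  intro f hf
  have hlocal : ∀ n, MemLp ((G n).indicator f) p μ := fun n =>
    (hf.indicator (hGopen n).measurableSet).mono_exponent_of_measure_support_ne_top
      (fun x hx => Set.indicator_of_notMem hx f) (hGfin n).ne hpq
  filter_upwards [ae_all_iff.mpr fun n => hp _ (hlocal n)] with x hx S hS
  obtain ⟨n, hxn⟩ := Set.mem_iUnion.mp (hGcov ▸ Set.mem_univ x)
  exact B.tendsto_setAverage_of_indicator ((hGopen n).mem_nhds hxn) hS (hx n S hS)

theorem isUpperSet_diffSet (B : DiffBasis μ) (G : ℕ → Set X) (hGopen : ∀ n, IsOpen (G n))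
    (hGfin : ∀ n, μ (G n) < ⊤) (hGcov : (⋃ n, G n) = Set.univ) : IsUpperSet B.diffSet :=
  fun _ _ hpq hp => ⟨hp.1.trans hpq, hp.2.mono G hGopen hGfin hGcov hpq⟩

end DiffBasis

end Localization

/-- **Theorem (statement 4).** Let `B` be a differentiation basis in a metric measure space
`𝕏 = (X, ρ, μ)`. If `X` is a countable union of (possibly overlapping) open sets of finite
measure, then (regardless of completeness) `diff(B)` takes one of the four forms
`∅`, `{∞}`, `[p₀,∞]`, `(p₀,∞]` for some `p₀ ∈ [1,∞)`. -/
theorem statement4 {X : Type*} [MetricSpace X] [MeasurableSpace X] [OpensMeasurableSpace X]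
    {μ : Measure X} (B : DiffBasis μ) (G : ℕ → Set X) (hGopen : ∀ n, IsOpen (G n))
    (hGfin : ∀ n, μ (G n) < ⊤) (hGcov : (⋃ n, G n) = Set.univ) :
    ∃ p₀ : ℝ≥0∞, 1 ≤ p₀ ∧ p₀ ≠ ⊤ ∧
      (B.diffSet = ∅ ∨ B.diffSet = {⊤} ∨
       B.diffSet = Set.Icc p₀ ⊤ ∨ B.diffSet = Set.Ioc p₀ ⊤) := by
  have hD := (B.isUpperSet_diffSet G hGopen hGfin hGcov).eq_Ici_sInf_or_eq_Ioi_sInf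
  by_cases htop : sInf B.diffSet = ⊤
  · rw [htop, Set.Ici_top, Set.Ioi_top] at hD
    exact ⟨1, le_rfl, one_ne_top, by tauto⟩
  · have hone : 1 ≤ sInf B.diffSet := le_sInf fun p hp => hp.1
    rw [← Set.Icc_top, ← Set.Ioc_top] at hD
    exact ⟨_, hone, htop, by tauto⟩
end

section
/- Let B be a differentiation basis in a complete metric measure space 𝕏 = (X, ρ, μ), and let p₁, p₂ ∈ [1,∞) with p₁ < p₂. If B differentiates L^{p₁}(𝕏), then B differentiates L^{p₂}(𝕏). -/
open MeasureTheory Filter Metric Topology ENNReal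

/-!
Given `f ∈ L^{p₂}` and `ε > 0`, the truncation `g = f · 1_{|f| ≥ ε}` lives on a set of finite
measure (Chebyshev), so it lies in `L^{p₁}` and is differentiated by `B`; and `|f - g| ≤ ε`
everywhere, so every average of `f` is within `ε` of the corresponding average of `g`, and
`f x` within `ε` of `g x`. Running `ε` through `1/(m+1)` and intersecting the countably many
full-measure sets gives the differentiation of `f`.
-/

lemma norm_sub_indicator_norm_ge_le {α E : Type*} [NormedAddCommGroup E] (f : α → E) {ε : ℝ}
    (hε : 0 ≤ ε) (y : α) :
    ‖f y - {z | ε ≤ ‖f z‖}.indicator f y‖ ≤ ε := by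
  by_cases hy : ε ≤ ‖f y‖
  · simpa [Set.indicator_of_mem (show y ∈ {z | ε ≤ ‖f z‖} from hy)] using hε
  · simpa [Set.indicator_of_notMem (show y ∉ {z | ε ≤ ‖f z‖} from hy)] using (not_le.1 hy).le

lemma MeasureTheory.MemLp.indicator_norm_ge {α E : Type*} [MeasurableSpace α] {μ : Measure α}
    [NormedAddCommGroup E] {p q : ℝ≥0∞} {f : α → E} (hf : MemLp f p μ) (hp₀ : p ≠ 0)
    (hp : p ≠ ∞) {ε : ℝ} (hε : 0 < ε) (hqp : q ≤ p) :
    MemLp ({y | ε ≤ ‖f y‖}.indicator f) q μ := by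
  have hmeas : NullMeasurableSet {y | ε ≤ ‖f y‖} μ :=
    nullMeasurableSet_le aemeasurable_const hf.1.norm.aemeasurable
  have hfin : μ {y | ε ≤ ‖f y‖} ≠ ∞ := by
    simpa [← NNReal.coe_le_coe, hε.le] using
      (hf.meas_ge_lt_top hp₀ hp (ε := ε.toNNReal) (by simpa using hε)).ne
  have hp_mem : MemLp ({y | ε ≤ ‖f y‖}.indicator f) p μ :=
    ⟨hf.1.indicator₀ hmeas, (MeasureTheory.eLpNorm_indicator_le f).trans_lt hf.2⟩
  exact hp_mem.mono_exponent_of_measure_support_ne_top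
    (fun y hy => Set.indicator_of_notMem hy f) hfin hqp

lemma dist_setAverage_le {α E : Type*} [MeasurableSpace α] {μ : Measure α}
    [NormedAddCommGroup E] [NormedSpace ℝ E] {f g : α → E} {s : Set α} (hs : μ s < ∞)
    (hf : IntegrableOn f s μ) (hg : IntegrableOn g s μ) {c : ℝ} (hc : 0 ≤ c)
    (hfg : ∀ y ∈ s, dist (f y) (g y) ≤ c) :
    dist (⨍ y in s, f y ∂μ) (⨍ y in s, g y ∂μ) ≤ c := by
  rw [dist_eq_norm, setAverage_eq, setAverage_eq, ← smul_sub, ← integral_sub hf hg, norm_smul,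
    norm_inv, Real.norm_of_nonneg measureReal_nonneg]
  have hint : ‖∫ y in s, f y - g y ∂μ‖ ≤ c * μ.real s :=
    norm_setIntegral_le_of_norm_le_const hs fun y hy => by simpa [dist_eq_norm] using hfg y hy
  rcases (measureReal_nonneg (μ := μ) (s := s)).eq_or_lt with h | h
  · simpa [← h] using hc
  · calc (μ.real s)⁻¹ * ‖∫ y in s, f y - g y ∂μ‖ ≤ (μ.real s)⁻¹ * (c * μ.real s) := by gcongr
      _ = c := by field_simp

lemma tendsto_of_uniform_approx {ι Y : Type*} [PseudoMetricSpace Y] {l : Filter ι}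
    {u : ι → Y} {a : Y} {v : ℕ → ι → Y} {b : ℕ → Y} {c : ℕ → ℝ}
    (hc : Tendsto c atTop (𝓝 0)) (hv : ∀ m, Tendsto (v m) l (𝓝 (b m)))
    (huv : ∀ m i, dist (u i) (v m i) ≤ c m) (hab : ∀ m, dist (b m) a ≤ c m) :
    Tendsto u l (𝓝 a) := by
  refine Metric.tendsto_nhds.2 fun δ hδ => ?_
  obtain ⟨m, hm⟩ := (hc.eventually (gt_mem_nhds (by positivity : 0 < δ / 3))).exists
  filter_upwards [Metric.tendsto_nhds.1 (hv m) (δ / 3) (by positivity)] with i hi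
  calc dist (u i) a ≤ dist (u i) (v m i) + dist (v m i) (b m) + dist (b m) a :=
        dist_triangle4 _ _ _ _
    _ < δ := by linarith [huv m i, hab m]

namespace DiffBasis

variable {X : Type*} [MetricSpace X] [MeasurableSpace X] {μ : Measure X}

lemma integrableOn_of_memLp (B : DiffBasis μ) {p : ℝ≥0∞} (hp : 1 ≤ p) {f : X → ℝ}
    (hf : MemLp f p μ) {x : X} {S : Set X} (hS : S ∈ B.sets x) : IntegrableOn f S μ :=
  have := isFiniteMeasure_restrict.2 (B.measure_lt_top x S hS).ne
  (hf.restrict S).integrable hp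

end DiffBasis

theorem statement6_general {X : Type*} [MetricSpace X] [MeasurableSpace X]
    {μ : Measure X} (B : DiffBasis μ) (p₁ p₂ : ℝ≥0∞)
    (hp₁ : 1 ≤ p₁) (hp₁₂ : p₁ < p₂) (hp₂ : p₂ ≠ ⊤)
    (hdiff : B.Differentiates p₁) : B.Differentiates p₂ := by
  have hp₂1 : 1 ≤ p₂ := hp₁.trans hp₁₂.le
  intro f hf
  set ε : ℕ → ℝ := fun m => 1 / ((m : ℝ) + 1)
  have hε : ∀ m, 0 < ε m := fun m => Nat.one_div_pos_of_nat
  set g : ℕ → X → ℝ := fun m => {y | ε m ≤ ‖f y‖}.indicator f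
  have hg : ∀ m p, p ≤ p₂ → MemLp (g m) p μ := fun m p hp =>
    hf.indicator_norm_ge (zero_lt_one.trans_le hp₂1).ne' hp₂ (hε m) hp
  have hfg : ∀ m y, dist (f y) (g m y) ≤ ε m := fun m y =>
    norm_sub_indicator_norm_ge_le f (hε m).le y
  filter_upwards [ae_all_iff.2 fun m => hdiff (g m) (hg m p₁ hp₁₂.le)] with x hgx S hS
  refine tendsto_of_uniform_approx tendsto_one_div_add_atTop_nhds_zero_nat
    (fun m => hgx m S hS) (fun m n => ?_) fun m => (dist_comm _ _).trans_le (hfg m x)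
  have hSn := hS.1 n
  exact dist_setAverage_le (B.measure_lt_top x _ hSn)
    (B.integrableOn_of_memLp hp₂1 hf hSn)
    (B.integrableOn_of_memLp hp₂1 (hg m p₂ le_rfl) hSn) (hε m).le
    fun y _ => hfg m y

/-- **Theorem (statement 6).** Let `B` be a differentiation basis in a complete metric measure
space `𝕏`, and let `p₁, p₂ ∈ [1,∞)` with `p₁ < p₂`. If `B` differentiates `L^{p₁}(𝕏)`, then
`B` differentiates `L^{p₂}(𝕏)`. -/
theorem statement6 {X : Type*} [MetricSpace X] [MeasurableSpace X] [OpensMeasurableSpace X]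
    {μ : Measure X} (hcomplete : μ.IsComplete) (B : DiffBasis μ) (p₁ p₂ : ℝ≥0∞)
    (hp₁ : 1 ≤ p₁) (hp₁₂ : p₁ < p₂) (hp₂ : p₂ ≠ ⊤)
    (hdiff : B.Differentiates p₁) : B.Differentiates p₂ :=
  statement6_general B p₁ p₂ hp₁ hp₁₂ hp₂ hdiff
end

section
/- Let B be a differentiation basis in a metric measure space 𝕏 = (X, ρ, μ) such that X = ⋃_{n∈ℕ} G_n for open sets G_n ⊆ X with μ(G_n) < ∞, and let p₁ ∈ [1,∞), p₂ ∈ (p₁,∞]. If B differentiates L^{p₁}(𝕏), then B differentiates L^{p₂}(𝕏). -/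
/-!
On a set of finite measure, `L^{p₂}` embeds into `L^{p₁}`, so for `f ∈ L^{p₂}` each truncation
`1_{Gₙ} f` lies in `L^{p₁}` and is differentiated by `B` outside a null set. Differentiation is
local: sets contracting to `x ∈ Gₙ` eventually lie in the open set `Gₙ`, where `1_{Gₙ} f = f`.
Discarding the countably many null sets gives the conclusion for `f`.
-/

open MeasureTheory Filter Metric Topology ENNReal

theorem MeasureTheory.MemLp.indicator_of_measure_ne_top {α E : Type*} [MeasurableSpace α]
    {μ : Measure α} [NormedAddCommGroup E] {p q : ℝ≥0∞} {f : α → E} {s : Set α} (hf : MemLp f q μ)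
    (hs : MeasurableSet s) (hμs : μ s ≠ ∞) (hpq : p ≤ q) : MemLp (s.indicator f) p μ :=
  (hf.indicator hs).mono_exponent_of_measure_support_ne_top
    (fun _ hx => Set.indicator_of_notMem hx f) hμs hpq

section Locality

variable {X : Type*} [MetricSpace X]

theorem DiffBasis.setAverage_eventuallyEq_of_eqOn [MeasurableSpace X] {μ : Measure X}
    {E : Type*} [NormedAddCommGroup E] [NormedSpace ℝ E] (B : DiffBasis μ) {x : X}
    {S : ℕ → Set X} (hS : ContractsTo B.sets x S) {U : Set X} (hU : U ∈ 𝓝 x) {f g : X → E}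
    (hfg : Set.EqOn f g U) :
    (fun n => ⨍ y in S n, f y ∂μ) =ᶠ[atTop] fun n => ⨍ y in S n, g y ∂μ := by
  filter_upwards [hS.eventually_subset hU] with n hSU
  exact setAverage_congr_fun (B.measurableSet' x (S n) (hS.1 n))
    (ae_of_all _ fun y hy => hfg (hSU hy))

end Locality

theorem statement7_general {X : Type*} [MetricSpace X] [MeasurableSpace X] [OpensMeasurableSpace X]
    {μ : Measure X} (B : DiffBasis μ) (G : ℕ → Set X) (hGopen : ∀ n, IsOpen (G n))
    (hGfin : ∀ n, μ (G n) < ⊤) (hGcov : (⋃ n, G n) = Set.univ)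
    (p₁ p₂ : ℝ≥0∞) (hp₁₂ : p₁ < p₂)
    (hdiff : B.Differentiates p₁) : B.Differentiates p₂ := by
  intro f hf
  have hGf : ∀ n, MemLp ((G n).indicator f) p₁ μ := fun n =>
    hf.indicator_of_measure_ne_top (hGopen n).measurableSet (hGfin n).ne hp₁₂.le
  filter_upwards [ae_all_iff.2 fun n => hdiff _ (hGf n)] with x hx S hS
  obtain ⟨n, hxn⟩ := Set.mem_iUnion.1 (hGcov ▸ Set.mem_univ x : x ∈ ⋃ n, G n)
  have hlim := hx n S hS
  rw [Set.indicator_of_mem hxn] at hlim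
  exact hlim.congr' <| B.setAverage_eventuallyEq_of_eqOn hS ((hGopen n).mem_nhds hxn)
    fun y hy => Set.indicator_of_mem hy f

/-- **Theorem (statement 7).** Let `B` be a differentiation basis in a metric measure space
`𝕏 = (X, ρ, μ)` such that `X = ⋃ₙ Gₙ` for open sets `Gₙ` of finite measure, and let
`p₁ ∈ [1,∞)`, `p₂ ∈ (p₁,∞]`. If `B` differentiates `L^{p₁}(𝕏)`, then `B` differentiates
`L^{p₂}(𝕏)`. -/
theorem statement7 {X : Type*} [MetricSpace X] [MeasurableSpace X] [OpensMeasurableSpace X]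
    {μ : Measure X} (B : DiffBasis μ) (G : ℕ → Set X) (hGopen : ∀ n, IsOpen (G n))
    (hGfin : ∀ n, μ (G n) < ⊤) (hGcov : (⋃ n, G n) = Set.univ)
    (p₁ p₂ : ℝ≥0∞) (hp₁ : 1 ≤ p₁) (hp₁' : p₁ ≠ ⊤) (hp₁₂ : p₁ < p₂)
    (hdiff : B.Differentiates p₁) : B.Differentiates p₂ :=
  statement7_general B G hGopen hGfin hGcov p₁ p₂ hp₁₂ hdiff
end

section
/- Let B be a differentiation basis in a metric measure space 𝕏 = (X, ρ, μ) such that ∞ ∉ diff(B) and diff(B) ≠ ∅. Then for every f ∈ L^∞(𝕏) and every subset E ⊆ E(f), either E has a measurable superset of measure zero, or E has no measurable superset of finite measure. -/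
open MeasureTheory Filter Metric Topology ENNReal

section Deriv

variable {X : Type*} [MetricSpace X] [MeasurableSpace X]

/-- The set of limit values of averages of `f` along sequences contracting to `x`. -/
def limitValues (Bx : X → Set (Set X)) (μ : MeasureTheory.Measure X) (f : X → ℝ)
    (x : X) : Set EReal :=
  {c | ∃ S : ℕ → Set X, ContractsTo Bx x S ∧
      Tendsto (fun n => ((⨍ y in S n, f y ∂μ : ℝ) : EReal)) atTop (𝓝 c)}

/-- The upper derivative `f̄(x)`: the largest limit value of averages along sequences
contracting to `x`. -/
noncomputable def upperDeriv (Bx : X → Set (Set X)) (μ : MeasureTheory.Measure X)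
    (f : X → ℝ) (x : X) : EReal :=
  sSup (limitValues Bx μ f x)

/-- The lower derivative `f̲(x)`: the smallest limit value of averages along sequences
contracting to `x`. -/
noncomputable def lowerDeriv (Bx : X → Set (Set X)) (μ : MeasureTheory.Measure X)
    (f : X → ℝ) (x : X) : EReal :=
  sInf (limitValues Bx μ f x)

/-- The exceptional set `E(f) = {x : f̄(x) ≠ f(x) or f̲(x) ≠ f(x)}`. -/
def exceptSet (Bx : X → Set (Set X)) (μ : MeasureTheory.Measure X) (f : X → ℝ) : Set X :=
  {x | upperDeriv Bx μ f x ≠ (f x : EReal) ∨ lowerDeriv Bx μ f x ≠ (f x : EReal)}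

end Deriv

/-!
Differentiating `L^p` for a single `p` already controls bounded functions locally. If
`‖f‖ ≤ C` a.e. and `A` is measurable of finite measure, then `1_A f` and `1_A` lie in `L^p`,
so at almost every `x ∈ A` their averages along any sequence contracting to `x` tend to `f x`
and `1`. The averages of `f` and of `1_A f` over `S` differ by at most
`C μ(S \ A) / μ(S) = C (1 - ⨍_S 1_A)`, which tends to `0`. Hence `A ∩ E(f)` is null, and so
is every subset of `E(f)` lying in a measurable set of finite measure.
-/

open ProbabilityTheory

section Averages

variable {X : Type*} [MeasurableSpace X] {f : X → ℝ} {A : Set X} {C : ℝ}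

theorem norm_integral_sub_integral_indicator_le {ν : Measure X} [IsFiniteMeasure ν]
    (hA : MeasurableSet A) (hf : AEStronglyMeasurable f ν) (hfC : ∀ᵐ x ∂ν, ‖f x‖ ≤ C) :
    ‖∫ x, f x ∂ν - ∫ x, A.indicator f x ∂ν‖ ≤ C * ν.real Aᶜ := by
  rw [integral_indicator hA, ← integral_add_compl hA (.of_bound hf C hfC), add_sub_cancel_left]
  exact norm_setIntegral_le_of_norm_le_const_ae (measure_lt_top _ _) (ae_restrict_of_ae hfC)

theorem setAverage_eq_integral_cond (μ : Measure X) (S : Set X) (g : X → ℝ) :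
    ⨍ x in S, g x ∂μ = ∫ x, g x ∂μ[|S] :=
  setAverage_eq' μ g S

theorem tendsto_setAverage_of_tendsto_setAverage_indicator {μ : Measure X} {ι : Type*}
    {l : Filter ι} {S : ι → Set X} (hS₀ : ∀ i, μ (S i) ≠ 0) (hS : ∀ i, μ (S i) ≠ ∞)
    (hA : MeasurableSet A) (hf : AEStronglyMeasurable f μ) (hfC : ∀ᵐ x ∂μ, ‖f x‖ ≤ C) {c : ℝ}
    (hdens : Tendsto (fun i => ⨍ x in S i, A.indicator (1 : X → ℝ) x ∂μ) l (𝓝 1))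
    (hlim : Tendsto (fun i => ⨍ x in S i, A.indicator f x ∂μ) l (𝓝 c)) :
    Tendsto (fun i => ⨍ x in S i, f x ∂μ) l (𝓝 c) := by
  have : ∀ i, IsProbabilityMeasure μ[|S i] := fun i =>
    cond_isProbabilityMeasure_of_finite (hS₀ i) (hS i)
  have hcompl : Tendsto (fun i => (μ[|S i]).real Aᶜ) l (𝓝 0) := by
    refine Tendsto.congr (fun i => ?_)
      (by simpa using (tendsto_const_nhds (x := (1 : ℝ))).sub hdens)
    rw [setAverage_eq_integral_cond, integral_indicator_one hA, probReal_compl_eq_one_sub hA]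
  have hdiff : Tendsto (fun i => (⨍ x in S i, f x ∂μ) - ⨍ x in S i, A.indicator f x ∂μ)
      l (𝓝 0) := by
    refine squeeze_zero_norm (fun i => ?_) (by simpa using hcompl.const_mul C)
    simp only [setAverage_eq_integral_cond]
    exact norm_integral_sub_integral_indicator_le hA (hf.mono_ac cond_absolutelyContinuous)
      (cond_absolutelyContinuous.ae_le hfC)
  simpa using hlim.add hdiff

end Averages

theorem notMem_exceptSet_of_forall_tendsto {X : Type*} [MetricSpace X] [MeasurableSpace X]
    {Bx : X → Set (Set X)} {μ : Measure X} {f : X → ℝ} {x : X}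
    (hex : ∃ S, ContractsTo Bx x S)
    (h : ∀ S, ContractsTo Bx x S → Tendsto (fun n => ⨍ y in S n, f y ∂μ) atTop (𝓝 (f x))) :
    x ∉ exceptSet Bx μ f := by
  have hvals : limitValues Bx μ f x = {(f x : EReal)} := by
    ext c
    constructor
    · rintro ⟨S, hS, hc⟩
      exact tendsto_nhds_unique hc (EReal.tendsto_coe.2 (h S hS))
    · rintro rfl
      obtain ⟨S, hS⟩ := hex
      exact ⟨S, hS, EReal.tendsto_coe.2 (h S hS)⟩
  simp [exceptSet, upperDeriv, lowerDeriv, hvals]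

namespace DiffBasis

variable {X : Type*} [MetricSpace X] [MeasurableSpace X] {μ : Measure X} {B : DiffBasis μ}
  {p : ℝ≥0∞} {f : X → ℝ} {A : Set X}

theorem Differentiates.ae_tendsto_setAverage_of_memLp_top (hB : B.Differentiates p)
    (hf : MemLp f ∞ μ) (hA : MeasurableSet A) (hAfin : μ A ≠ ∞) :
    ∀ᵐ x ∂μ, x ∈ A → ∀ S, ContractsTo B.sets x S →
      Tendsto (fun n => ⨍ y in S n, f y ∂μ) atTop (𝓝 (f x)) := by
  have : IsFiniteMeasure (μ.restrict A) := isFiniteMeasure_restrict.2 hAfin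
  have hfA : MemLp (A.indicator f) p μ :=
    (memLp_indicator_iff_restrict hA).2 ((hf.restrict A).mono_exponent le_top)
  have h1A : MemLp (A.indicator (1 : X → ℝ)) p μ := memLp_indicator_const p hA 1 (.inr hAfin)
  filter_upwards [hB _ hfA, hB _ h1A] with x hfx h1x hxA S hS
  refine tendsto_setAverage_of_tendsto_setAverage_indicator
    (fun n => (B.measure_pos x _ (hS.1 n)).ne') (fun n => (B.measure_lt_top x _ (hS.1 n)).ne)
    hA hf.1 (ae_le_lpNorm_exponent_top hf) ?_ ?_
  · simpa [hxA] using h1x S hS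
  · simpa [hxA] using hfx S hS

theorem Differentiates.measure_inter_exceptSet_eq_zero (hB : B.Differentiates p)
    (hf : MemLp f ∞ μ) (hA : MeasurableSet A) (hAfin : μ A ≠ ∞) :
    μ (A ∩ exceptSet B.sets μ f) = 0 := by
  rw [measure_eq_zero_iff_ae_notMem]
  filter_upwards [hB.ae_tendsto_setAverage_of_memLp_top hf hA hAfin, B.ae_contracts]
    with x hx hex hxAE
  exact notMem_exceptSet_of_forall_tendsto hex (hx hxAE.1) hxAE.2

end DiffBasis

theorem statement8_general {X : Type*} [MetricSpace X] [MeasurableSpace X]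
    {μ : Measure X} (B : DiffBasis μ)
    (hne : B.diffSet ≠ ∅)
    (f : X → ℝ) (hf : MemLp f ⊤ μ) (E : Set X) (hE : E ⊆ exceptSet B.sets μ f) :
    (∃ A : Set X, MeasurableSet A ∧ E ⊆ A ∧ μ A = 0) ∨
      ¬ ∃ A : Set X, MeasurableSet A ∧ E ⊆ A ∧ μ A < ⊤ := by
  refine or_iff_not_imp_right.2 fun hfin => ?_
  obtain ⟨A, hA, hEA, hAfin⟩ := not_not.1 hfin
  obtain ⟨p, -, hp⟩ := Set.nonempty_iff_ne_empty.2 hne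
  have hE₀ : μ E = 0 :=
    measure_mono_null (Set.subset_inter hEA hE) (hp.measure_inter_exceptSet_eq_zero hf hA hAfin.ne)
  obtain ⟨N, hEN, hN, hN₀⟩ := exists_measurable_superset_of_null hE₀
  exact ⟨N, hN, hEN, hN₀⟩

/-- **Theorem (statement 8).** Let `B` be a differentiation basis in a metric measure space
`𝕏` such that `∞ ∉ diff(B)` and `diff(B) ≠ ∅`. Then for every `f ∈ L^∞(𝕏)` and every subset
`E ⊆ E(f)` of the exceptional set, either `E` has a measurable superset of measure zero, or
`E` has no measurable superset of finite measure. -/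
theorem statement8 {X : Type*} [MetricSpace X] [MeasurableSpace X] [OpensMeasurableSpace X]
    {μ : Measure X} (B : DiffBasis μ)
    (htop : ⊤ ∉ B.diffSet) (hne : B.diffSet ≠ ∅)
    (f : X → ℝ) (hf : MemLp f ⊤ μ) (E : Set X) (hE : E ⊆ exceptSet B.sets μ f) :
    (∃ A : Set X, MeasurableSet A ∧ E ⊆ A ∧ μ A = 0) ∨
      ¬ ∃ A : Set X, MeasurableSet A ∧ E ⊆ A ∧ μ A < ⊤ :=
  statement8_general B hne f hf E hE
end

section
/- Let 𝕏 = (X, ρ, μ) be a metric measure space and fix p ∈ [1,∞). For every n ∈ ℕ, let 𝒮_n be a countable collection of measurable sets of finite positive measure such that M_{𝒮_n} satisfies the weak-type (p,p) inequality with a constant C_p ∈ (0,∞) independent of n. Assume that whenever S₁ ∈ 𝒮_{n₁} and S₂ ∈ 𝒮_{n₂} for distinct n₁, n₂ ∈ ℕ, then S₁ ⊆ S₂ or S₂ ⊆ S₁ or S₁ ∩ S₂ = ∅. Then, with 𝒮 := ⋃_{n∈ℕ} 𝒮_n, the maximal operator M_𝒮 satisfies the weak-type (p,p) inequality with the same constant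 C_p. -/
/-!
The superlevel set `{M_𝒮 f > λ}` is the union of the countably many `S ∈ 𝒮` with
`Avg_{|f|}(S) > λ`, so by continuity of measure from below it suffices to bound the measure of
the union of finitely many of them. Label each of these finitely many sets by one `n` with
`S ∈ 𝒮 n`. Every set lies in a maximal one, and two maximal sets with different labels are
disjoint, since by the nesting hypothesis a containment between them would be an equality.
So the unions `K n` of the maximal sets labelled `n` are disjoint, and `M_{𝒮 n}(f 1_{K n}) > λ`
on `K n`; the weak-type inequality for `𝒮 n` gives `λ^p μ(K n) ≤ C^p ∫_{K n} |f|^p`, and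
summing over `n` gives the bound with the same constant.
-/

open MeasureTheory Filter Metric Topology ENNReal

section Maximal

variable {X : Type*} [MetricSpace X] [MeasurableSpace X]

/-- The average of `‖f‖` over `S`, as an extended nonnegative real. -/
noncomputable def avgNorm (μ : MeasureTheory.Measure X) (f : X → ℝ) (S : Set X) : ℝ≥0∞ :=
  (∫⁻ y in S, (‖f y‖₊ : ℝ≥0∞) ∂μ) / μ S

/-- The maximal operator associated with the collection `𝒮`:
`M_𝒮 f (x) = sup {Avg_{|f|}(S) : x ∈ S ∈ 𝒮}` (the supremum over the empty set is `0`). -/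
noncomputable def maximalFn (μ : MeasureTheory.Measure X) (𝒮 : Set (Set X)) (f : X → ℝ)
    (x : X) : ℝ≥0∞ :=
  ⨆ (S : Set X) (_ : S ∈ 𝒮) (_ : x ∈ S), avgNorm μ f S

/-- The maximal operator of `𝒮` satisfies the weak-type `(p,p)` inequality with constant `C`. -/
def HasWeakType (μ : MeasureTheory.Measure X) (𝒮 : Set (Set X)) (p : ℝ) (C : ℝ≥0∞) : Prop :=
  ∀ f : X → ℝ, MemLp f (ENNReal.ofReal p) μ → ∀ l : ℝ≥0∞, l ≠ 0 → l ≠ ⊤ →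
    l ^ p * μ {x | l < maximalFn μ 𝒮 f x} ≤
      C ^ p * eLpNorm f (ENNReal.ofReal p) μ ^ p

/-- The maximal operator of `𝒮` is bounded on `L^∞` (the convention for weak type `(∞,∞)`). -/
def BoundedOnLinfty (μ : MeasureTheory.Measure X) (𝒮 : Set (Set X)) : Prop :=
  ∃ C : ℝ≥0∞, C ≠ ⊤ ∧ ∀ f : X → ℝ, MemLp f ⊤ μ →
    essSup (maximalFn μ 𝒮 f) μ ≤ C * eLpNorm f ⊤ μ

/-- `max(𝒮) = {p ∈ [1,∞] : M_𝒮 satisfies the weak-type (p,p) inequality}`, where weak type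
`(∞,∞)` means boundedness on `L^∞`. -/
def maxSet (μ : MeasureTheory.Measure X) (𝒮 : Set (Set X)) : Set ℝ≥0∞ :=
  {p : ℝ≥0∞ | 1 ≤ p ∧
    ((p ≠ ⊤ ∧ ∃ C : ℝ≥0∞, C ≠ ⊤ ∧ HasWeakType μ 𝒮 p.toReal C) ∨
      (p = ⊤ ∧ BoundedOnLinfty μ 𝒮))}

/-- The smallest weak-type `(p,p)` constant `‖M_𝒮‖_{L^p → L^{p,∞}}`. -/
noncomputable def weakNorm (μ : MeasureTheory.Measure X) (𝒮 : Set (Set X)) (p : ℝ) : ℝ≥0∞ :=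
  sInf {C : ℝ≥0∞ | HasWeakType μ 𝒮 p C}

end Maximal

open Set Function

section MeasureLemmas

variable {α : Type*} [MeasurableSpace α] {μ : Measure α}

theorem eLpNorm_ofReal_rpow {E : Type*} [NormedAddCommGroup E] (f : α → E) {p : ℝ}
    (hp : 0 < p) : eLpNorm f (ENNReal.ofReal p) μ ^ p = ∫⁻ x, ‖f x‖ₑ ^ p ∂μ := by
  have h := eLpNorm_nnreal_pow_eq_lintegral (μ := μ) (f := f) (p := p.toNNReal)
    (Real.toNNReal_pos.2 hp).ne'
  rwa [Real.coe_toNNReal _ hp.le] at h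

theorem measure_sUnion_eq_iSup_finset {𝒜 : Set (Set α)} (h𝒜 : 𝒜.Countable) :
    μ (⋃₀ 𝒜) = ⨆ (F : Finset (Set α)) (_ : ↑F ⊆ 𝒜), μ (⋃₀ ↑F) := by
  refine le_antisymm ?_ (iSup₂_le fun F hF => measure_mono (sUnion_mono hF))
  have := h𝒜.to_subtype
  have hmono : Monotone fun F : Finset 𝒜 => ⋃ S ∈ F, (S : Set α) :=
    fun F G hFG => biUnion_subset_biUnion_left hFG
  rw [sUnion_eq_iUnion, iUnion_eq_iUnion_finset, hmono.measure_iUnion]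
  refine iSup_le fun F => le_iSup₂_of_le (F.map (Embedding.subtype _)) ?_ ?_
  · simp
  · simp [sUnion_image]

theorem mul_measure_iUnion_le_of_pairwise_disjoint {ι : Type*} [Countable ι] {K : ι → Set α}
    (hK : ∀ i, MeasurableSet (K i)) (hd : Pairwise (Disjoint on K)) {g : α → ℝ≥0∞}
    {a b : ℝ≥0∞} (h : ∀ i, a * μ (K i) ≤ b * ∫⁻ x in K i, g x ∂μ) :
    a * μ (⋃ i, K i) ≤ b * ∫⁻ x, g x ∂μ :=
  calc a * μ (⋃ i, K i) = ∑' i, a * μ (K i) := by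
        rw [measure_iUnion hd hK, ENNReal.tsum_mul_left]
    _ ≤ ∑' i, b * ∫⁻ x in K i, g x ∂μ := ENNReal.tsum_le_tsum h
    _ = b * ∫⁻ x in ⋃ i, K i, g x ∂μ := by rw [ENNReal.tsum_mul_left, lintegral_iUnion hK hd]
    _ ≤ b * ∫⁻ x, g x ∂μ := by gcongr; exact Measure.restrict_le_self

end MeasureLemmas

section MaximalUnion

variable {α β : Type*}

def maximalUnion (F : Set (Set α)) (ι : Set α → β) (n : β) : Set α :=
  ⋃₀ {M | Maximal (· ∈ F) M ∧ ι M = n}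

theorem iUnion_maximalUnion {F : Set (Set α)} (hF : F.Finite) (ι : Set α → β) :
    ⋃ n, maximalUnion F ι n = ⋃₀ F := by
  refine Subset.antisymm (iUnion_subset fun n => sUnion_subset_sUnion fun M hM => hM.1.prop) ?_
  rintro x ⟨S, hS, hxS⟩
  obtain ⟨M, hSM, hM⟩ := hF.exists_le_maximal hS
  exact mem_iUnion.2 ⟨ι M, M, ⟨hM, rfl⟩, hSM hxS⟩

theorem pairwise_disjoint_maximalUnion {F : Set (Set α)} {ι : Set α → β}
    (hnest : ∀ S ∈ F, ∀ T ∈ F, ι S ≠ ι T → S ⊆ T ∨ T ⊆ S ∨ S ∩ T = ∅) :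
    Pairwise (Disjoint on maximalUnion F ι) := by
  intro n m hnm
  simp only [onFun, maximalUnion, disjoint_sUnion_left, disjoint_sUnion_right]
  rintro M' ⟨hM', rfl⟩ M ⟨hM, rfl⟩
  rcases hnest M hM.prop M' hM'.prop hnm with hMM' | hM'M | hdisj
  · exact absurd (congrArg ι (hM.eq_of_subset hM'.prop hMM')) hnm
  · exact absurd (congrArg ι (hM'.eq_of_subset hM.prop hM'M)).symm hnm
  · exact disjoint_iff_inter_eq_empty.2 hdisj

end MaximalUnion

section WeakType

variable {X : Type*} [MeasurableSpace X] {μ : Measure X}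

theorem setOf_lt_maximalFn (𝒯 : Set (Set X)) (f : X → ℝ) (l : ℝ≥0∞) :
    {x | l < maximalFn μ 𝒯 f x} = ⋃₀ {S | S ∈ 𝒯 ∧ l < avgNorm μ f S} := by
  ext x
  simp only [maximalFn, mem_ofPred_eq, lt_iSup_iff, exists_prop, mem_sUnion]
  exact exists_congr fun S => by tauto

theorem avgNorm_indicator_of_subset (f : X → ℝ) {K T : Set X} (hK : MeasurableSet K)
    (hTK : T ⊆ K) : avgNorm μ (K.indicator f) T = avgNorm μ f T := by
  simp only [avgNorm, nnnorm_indicator_eq_indicator_nnnorm, ENNReal.coe_indicator]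
  rw [lintegral_indicator hK, Measure.restrict_restrict hK, inter_eq_right.2 hTK]

theorem HasWeakType.mul_measure_le_setLIntegral {𝒯 : Set (Set X)} {p : ℝ} {C : ℝ≥0∞}
    (hweak : HasWeakType μ 𝒯 p C) (hp : 0 < p) {f : X → ℝ}
    (hf : MemLp f (ENNReal.ofReal p) μ) {l : ℝ≥0∞} (hl0 : l ≠ 0) (hltop : l ≠ ⊤) {K : Set X}
    (hK : MeasurableSet K)
    (hcover : ∀ x ∈ K, ∃ T ∈ 𝒯, T ⊆ K ∧ x ∈ T ∧ l < avgNorm μ f T) :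
    l ^ p * μ K ≤ C ^ p * ∫⁻ x in K, ‖f x‖ₑ ^ p ∂μ := by
  have hK_sub : K ⊆ {x | l < maximalFn μ 𝒯 (K.indicator f) x} := by
    intro x hx
    obtain ⟨T, hT, hTK, hxT, hlT⟩ := hcover x hx
    rw [setOf_lt_maximalFn]
    exact ⟨T, ⟨hT, (avgNorm_indicator_of_subset f hK hTK).symm ▸ hlT⟩, hxT⟩
  calc l ^ p * μ K ≤ l ^ p * μ {x | l < maximalFn μ 𝒯 (K.indicator f) x} := by gcongr
    _ ≤ C ^ p * eLpNorm (K.indicator f) (ENNReal.ofReal p) μ ^ p :=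
        hweak _ (hf.indicator hK) l hl0 hltop
    _ = C ^ p * ∫⁻ x in K, ‖f x‖ₑ ^ p ∂μ := by
        rw [eLpNorm_indicator_eq_eLpNorm_restrict hK, eLpNorm_ofReal_rpow _ hp]

theorem mul_measure_sUnion_le_of_nested {𝒮 : ℕ → Set (Set X)}
    (hmeas : ∀ n, ∀ S ∈ 𝒮 n, MeasurableSet S) {p : ℝ} (hp : 0 < p) {C : ℝ≥0∞}
    (hweak : ∀ n, HasWeakType μ (𝒮 n) p C)
    (hnest : ∀ n₁ n₂, n₁ ≠ n₂ → ∀ S₁ ∈ 𝒮 n₁, ∀ S₂ ∈ 𝒮 n₂,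
      S₁ ⊆ S₂ ∨ S₂ ⊆ S₁ ∨ S₁ ∩ S₂ = ∅)
    {f : X → ℝ} (hf : MemLp f (ENNReal.ofReal p) μ) {l : ℝ≥0∞} (hl0 : l ≠ 0) (hltop : l ≠ ⊤)
    (F : Finset (Set X)) (ι : Set X → ℕ) (hι : ∀ S ∈ F, S ∈ 𝒮 (ι S))
    (hF : ∀ S ∈ F, l < avgNorm μ f S) :
    l ^ p * μ (⋃₀ ↑F) ≤ C ^ p * eLpNorm f (ENNReal.ofReal p) μ ^ p := by
  set K := maximalUnion (F : Set (Set X)) ι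
  have hK : ∀ n, MeasurableSet (K n) := fun n =>
    (F.finite_toSet.subset fun M hM => hM.1.prop).measurableSet_sUnion fun M hM =>
      hmeas _ M (hι M hM.1.prop)
  have hKd : Pairwise (Disjoint on K) := pairwise_disjoint_maximalUnion fun S hS T hT hST =>
    hnest _ _ hST S (hι S hS) T (hι T hT)
  rw [← iUnion_maximalUnion F.finite_toSet ι, eLpNorm_ofReal_rpow _ hp]
  refine mul_measure_iUnion_le_of_pairwise_disjoint hK hKd fun n =>
    (hweak n).mul_measure_le_setLIntegral hp hf hl0 hltop (hK n) ?_
  rintro x ⟨M, ⟨hM, rfl⟩, hxM⟩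
  exact ⟨M, hι M hM.prop, subset_sUnion_of_mem ⟨hM, rfl⟩, hxM, hF M hM.prop⟩

end WeakType

theorem statement10_general {X : Type*} [MeasurableSpace X] {μ : Measure X}
    (p : ℝ) (hp : 1 ≤ p) (𝒮 : ℕ → Set (Set X))
    (hcnt : ∀ n, (𝒮 n).Countable)
    (hmeas : ∀ n, ∀ S ∈ 𝒮 n, MeasurableSet S)
    (C : ℝ≥0∞)
    (hweak : ∀ n, HasWeakType μ (𝒮 n) p C)
    (hnest : ∀ n₁ n₂, n₁ ≠ n₂ → ∀ S₁ ∈ 𝒮 n₁, ∀ S₂ ∈ 𝒮 n₂,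
      S₁ ⊆ S₂ ∨ S₂ ⊆ S₁ ∨ S₁ ∩ S₂ = ∅) :
    HasWeakType μ (⋃ n, 𝒮 n) p C := by
  intro f hf l hl0 hltop
  set 𝒜 := {S | S ∈ ⋃ n, 𝒮 n ∧ l < avgNorm μ f S}
  have h𝒜 : 𝒜.Countable := (countable_iUnion hcnt).mono fun S hS => hS.1
  choose! ι hι using fun S (hS : S ∈ 𝒜) => mem_iUnion.1 hS.1
  rw [setOf_lt_maximalFn, measure_sUnion_eq_iSup_finset h𝒜]
  simp only [ENNReal.mul_iSup]
  exact iSup₂_le fun F hF => mul_measure_sUnion_le_of_nested hmeas (zero_lt_one.trans_le hp)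
    hweak hnest hf hl0 hltop F ι (fun S hS => hι S (hF hS)) fun S hS => (hF hS).2

/-- **Theorem (statement 10, Proposition P2).** Let `𝕏` be a metric measure space and fix
`p ∈ [1,∞)`. For every `n`, let `𝒮 n` be a countable collection of measurable sets of finite
positive measure such that `M_{𝒮 n}` satisfies the weak-type `(p,p)` inequality with a
constant `C ∈ (0,∞)` independent of `n`. Assume that whenever `S₁ ∈ 𝒮 n₁` and `S₂ ∈ 𝒮 n₂`
for distinct `n₁ ≠ n₂`, then `S₁ ⊆ S₂`, `S₂ ⊆ S₁`, or `S₁ ∩ S₂ = ∅`. Then the maximal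
operator of `𝒮 = ⋃ₙ 𝒮 n` satisfies the weak-type `(p,p)` inequality with the same
constant `C`. -/
theorem statement10 {X : Type*} [MetricSpace X] [MeasurableSpace X] {μ : Measure X}
    (p : ℝ) (hp : 1 ≤ p) (𝒮 : ℕ → Set (Set X))
    (hcnt : ∀ n, (𝒮 n).Countable)
    (hmeas : ∀ n, ∀ S ∈ 𝒮 n, MeasurableSet S)
    (hpos : ∀ n, ∀ S ∈ 𝒮 n, 0 < μ S)
    (hfin : ∀ n, ∀ S ∈ 𝒮 n, μ S < ⊤)
    (C : ℝ≥0∞) (hC0 : 0 < C) (hC : C ≠ ⊤)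
    (hweak : ∀ n, HasWeakType μ (𝒮 n) p C)
    (hnest : ∀ n₁ n₂, n₁ ≠ n₂ → ∀ S₁ ∈ 𝒮 n₁, ∀ S₂ ∈ 𝒮 n₂,
      S₁ ⊆ S₂ ∨ S₂ ⊆ S₁ ∨ S₁ ∩ S₂ = ∅) :
    HasWeakType μ (⋃ n, 𝒮 n) p C :=
  statement10_general p hp 𝒮 hcnt hmeas C hweak hnest
end

section
/- Let B be an uncentered differentiation basis in a metric measure space 𝕏 = (X, ρ, μ) consisting of either countably many measurable sets or arbitrarily many open sets, and let f ∈ L^p(𝕏) for some p ∈ [1,∞]. Then the upper and lower derivatives f̄ and f_ are measurable; in fact, for every λ ∈ ℝ, {x ∈ X : f̄(x) ≥ λ} = ⋂_{n∈ℕ} ⋃_{S ∈ B_{λ,n}} S, where B_{λ,n} consists of all S ∈ B such that Avg_f(S) ≥ λ − 2^{-n} and S ⊆ B(y, 2^{-n}) for some ball B(y, 2^{-n}) ⊆ X of radius 2^{-n}. -/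
/-!
A point `x` has `f̄(x) ≥ λ` exactly when, for every `n`, it lies in a member of `B` contained in a
ball of radius `2⁻ⁿ` whose average is at least `λ - 2⁻ⁿ`. Such members are taken from a sequence
contracting to `x` whose averages tend to a limit value above `λ - 2⁻ⁿ`. Conversely, since `B` is
uncentered these members belong to `B(x)` and contract to `x`, and by compactness of `[-∞, ∞]` a
subsequence of their averages converges, to a limit value that is at least `λ`. Each union
`⋃ B_{λ,n}` is a countable union of measurable sets or a union of open sets, so `f̄` is measurable,
and `f̲ = -(-f)‾`.
-/

open MeasureTheory Filter Metric Topology ENNReal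

namespace EReal

theorem sSup_neg (s : Set EReal) : sSup (-s) = -sInf s := by
  apply le_antisymm
  · exact sSup_le fun x hx => EReal.le_neg_of_le_neg (sInf_le hx)
  · rw [EReal.neg_le]
    refine le_sInf fun x hx => ?_
    rw [EReal.neg_le]
    exact le_sSup (by rwa [Set.mem_neg, neg_neg])

theorem measurable_of_measurableSet_coe_le {α : Type*} [MeasurableSpace α] {f : α → EReal}
    (hf : ∀ r : ℝ, MeasurableSet {x | (r : EReal) ≤ f x}) : Measurable f := by
  refine measurable_of_Ici fun a => ?_
  induction a using EReal.rec with
  | bot => simp [Set.Ici_bot]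
  | coe r => exact hf r
  | top =>
    have htop : f ⁻¹' Set.Ici ⊤ = ⋂ n : ℕ, {x | ((n : ℝ) : EReal) ≤ f x} := by
      ext x
      simp only [Set.mem_preimage, Set.mem_Ici, top_le_iff, Set.mem_iInter, Set.mem_ofPred_eq,
        EReal.eq_top_iff_forall_lt]
      refine ⟨fun h n => (h n).le, fun h y => ?_⟩
      obtain ⟨n, hn⟩ := exists_nat_gt y
      exact (EReal.coe_lt_coe_iff.2 hn).trans_le (h n)
    rw [htop]
    exact MeasurableSet.iInter fun n => hf n

end EReal

theorem ContractsTo.comp_strictMono {X : Type*} [MetricSpace X] {Bx : X → Set (Set X)} {x : X}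
    {S : ℕ → Set X} (hS : ContractsTo Bx x S) {φ : ℕ → ℕ} (hφ : StrictMono φ) :
    ContractsTo Bx x (S ∘ φ) := by
  obtain ⟨hmem, r, hr, hsub⟩ := hS
  exact ⟨fun n => hmem (φ n), r ∘ φ, hr.comp hφ.tendsto_atTop, fun n => hsub (φ n)⟩

section Derivatives

variable {X : Type*} [MetricSpace X] [MeasurableSpace X] {μ : Measure X}
  {Bx : X → Set (Set X)} {x : X} {f : X → ℝ}

theorem le_upperDeriv_of_le_average {S : ℕ → Set X} (hS : ContractsTo Bx x S) {a : ℕ → ℝ}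
    {l : ℝ} (ha : Tendsto a atTop (𝓝 l)) (hle : ∀ n, a n ≤ ⨍ y in S n, f y ∂μ) :
    (l : EReal) ≤ upperDeriv Bx μ f x := by
  obtain ⟨c, -, φ, hφ, hc⟩ := isCompact_univ.tendsto_subseq
    (x := fun n => ((⨍ y in S n, f y ∂μ : ℝ) : EReal)) fun n => Set.mem_univ _
  have hmem : c ∈ limitValues Bx μ f x := ⟨S ∘ φ, hS.comp_strictMono hφ, hc⟩
  refine le_trans ?_ (le_sSup hmem)
  exact le_of_tendsto_of_tendsto' ((continuous_coe_real_ereal.tendsto l).comp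
    (ha.comp hφ.tendsto_atTop)) hc fun n => EReal.coe_le_coe_iff.2 (hle (φ n))

theorem exists_le_average_of_lt_upperDeriv {a : ℝ} (ha : (a : EReal) < upperDeriv Bx μ f x)
    {r : ℝ} (hr : 0 < r) : ∃ S ∈ Bx x, a ≤ ⨍ y in S, f y ∂μ ∧ S ⊆ ball x r := by
  obtain ⟨c, ⟨S, ⟨hmem, ρ, hρ, hsub⟩, hc⟩, hac⟩ := lt_sSup_iff.1 ha
  have hlarge : ∀ᶠ k in atTop, (a : EReal) < ⨍ y in S k, f y ∂μ :=
    hc.eventually (eventually_gt_nhds hac)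
  have hsmall : ∀ᶠ k in atTop, ρ k < r := hρ.eventually (eventually_lt_nhds hr)
  obtain ⟨k, hk, hρk⟩ := (hlarge.and hsmall).exists
  exact ⟨S k, hmem k, EReal.coe_le_coe_iff.1 hk.le, (hsub k).trans (ball_subset_ball hρk.le)⟩

theorem limitValues_neg : limitValues Bx μ (fun y => -f y) x = -limitValues Bx μ f x := by
  have havg : ∀ S : Set X,
      ((⨍ y in S, -f y ∂μ : ℝ) : EReal) = -((⨍ y in S, f y ∂μ : ℝ) : EReal) := fun S => by
    rw [← EReal.coe_neg, average_neg]
  ext c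
  simp only [Set.mem_neg, limitValues, Set.mem_ofPred_eq, havg]
  constructor
  · rintro ⟨S, hS, hc⟩
    exact ⟨S, hS, by simpa using hc.neg⟩
  · rintro ⟨S, hS, hc⟩
    exact ⟨S, hS, by simpa using hc.neg⟩

theorem lowerDeriv_eq_neg_upperDeriv_neg :
    lowerDeriv Bx μ f = fun x => -upperDeriv Bx μ (fun y => -f y) x := by
  funext x
  rw [upperDeriv, limitValues_neg, EReal.sSup_neg, neg_neg, lowerDeriv]

end Derivatives

namespace DiffBasis

variable {X : Type*} [MetricSpace X] [MeasurableSpace X] {μ : Measure X} (B : DiffBasis μ)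

/-- The paper's `B_{λ,n}` is `B.superlevelFamily f (λ - 2⁻ⁿ) 2⁻ⁿ`. -/
def superlevelFamily (f : X → ℝ) (a r : ℝ) : Set (Set X) :=
  {S | S ∈ B.family ∧ a ≤ ⨍ y in S, f y ∂μ ∧ ∃ y : X, S ⊆ ball y r}

theorem mem_family {x : X} {S : Set X} (hS : S ∈ B.sets x) : S ∈ B.family :=
  Set.mem_iUnion.2 ⟨x, hS⟩

theorem measurableSet_of_mem_family {S : Set X} (hS : S ∈ B.family) : MeasurableSet S := by
  obtain ⟨x, hx⟩ := Set.mem_iUnion.1 hS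
  exact B.measurableSet' x S hx

theorem measurableSet_biUnion_of_subset_family [OpensMeasurableSpace X]
    (hsets : B.family.Countable ∨ ∀ S ∈ B.family, IsOpen S) {𝒮 : Set (Set X)}
    (h𝒮 : 𝒮 ⊆ B.family) : MeasurableSet (⋃ S ∈ 𝒮, S) := by
  rcases hsets with hcount | hopen
  · exact .biUnion (hcount.mono h𝒮) fun S hS => B.measurableSet_of_mem_family (h𝒮 hS)
  · exact (isOpen_biUnion fun S hS => hopen S (h𝒮 hS)).measurableSet

variable {B}

theorem setOf_le_upperDeriv (hunc : B.Uncentered) (f : X → ℝ) (l : ℝ) :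
    {x | (l : EReal) ≤ upperDeriv B.sets μ f x} =
      ⋂ n : ℕ, ⋃ S ∈ B.superlevelFamily f (l - 2⁻¹ ^ n) (2⁻¹ ^ n), S := by
  have hpow : Tendsto (fun n : ℕ => (2⁻¹ : ℝ) ^ n) atTop (𝓝 0) :=
    tendsto_pow_atTop_nhds_zero_of_lt_one (by norm_num) (by norm_num)
  ext x
  simp only [Set.mem_ofPred_eq, Set.mem_iInter, Set.mem_iUnion, exists_prop]
  constructor
  · intro hx n
    have hlt : ((l - 2⁻¹ ^ n : ℝ) : EReal) < upperDeriv B.sets μ f x :=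
      (EReal.coe_lt_coe_iff.2 (sub_lt_self l (by positivity))).trans_le hx
    obtain ⟨S, hS, hle, hsub⟩ :=
      exists_le_average_of_lt_upperDeriv hlt (by positivity : (0 : ℝ) < 2⁻¹ ^ n)
    exact ⟨S, ⟨B.mem_family hS, hle, x, hsub⟩, B.mem_of_mem x S hS⟩
  · intro hx
    choose S hS hxS using hx
    have hmem : ∀ n, S n ∈ B.sets x := fun n => by
      rw [hunc x]
      exact ⟨(hS n).1, hxS n⟩
    have hsub : ∀ n, S n ⊆ ball x (2 * 2⁻¹ ^ n) := fun n => by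
      obtain ⟨y, hy⟩ := (hS n).2.2
      have hyx : dist y x < 2⁻¹ ^ n := mem_ball'.1 (hy (hxS n))
      exact hy.trans (ball_subset_ball' (by linarith))
    have hcontr : ContractsTo B.sets x S :=
      ⟨hmem, _, by simpa using hpow.const_mul 2, hsub⟩
    exact le_upperDeriv_of_le_average hcontr (by simpa using tendsto_const_nhds.sub hpow)
      fun n => (hS n).2.1

theorem measurable_upperDeriv [OpensMeasurableSpace X] (hunc : B.Uncentered)
    (hsets : B.family.Countable ∨ ∀ S ∈ B.family, IsOpen S) (f : X → ℝ) :
    Measurable (upperDeriv B.sets μ f) := by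
  refine EReal.measurable_of_measurableSet_coe_le fun l => ?_
  rw [setOf_le_upperDeriv hunc f l]
  exact .iInter fun n => B.measurableSet_biUnion_of_subset_family hsets fun S hS => hS.1

theorem measurable_lowerDeriv [OpensMeasurableSpace X] (hunc : B.Uncentered)
    (hsets : B.family.Countable ∨ ∀ S ∈ B.family, IsOpen S) (f : X → ℝ) :
    Measurable (lowerDeriv B.sets μ f) := by
  rw [lowerDeriv_eq_neg_upperDeriv_neg]
  exact measurable_neg.comp (measurable_upperDeriv hunc hsets fun y => -f y)

end DiffBasis

theorem statement17_general {X : Type*} [MetricSpace X] [MeasurableSpace X] [OpensMeasurableSpace X]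
    {μ : Measure X} (B : DiffBasis μ) (hunc : B.Uncentered)
    (hsets : B.family.Countable ∨ ∀ S ∈ B.family, IsOpen S)
    (f : X → ℝ) :
    Measurable (upperDeriv B.sets μ f) ∧ Measurable (lowerDeriv B.sets μ f) ∧
      ∀ l : ℝ, {x | (l : EReal) ≤ upperDeriv B.sets μ f x} =
        ⋂ n : ℕ, ⋃ S ∈ {S | S ∈ B.family ∧ l - 2⁻¹ ^ n ≤ ⨍ y in S, f y ∂μ ∧
          ∃ y : X, S ⊆ Metric.ball y (2⁻¹ ^ n)}, S :=
  ⟨B.measurable_upperDeriv hunc hsets f, B.measurable_lowerDeriv hunc hsets f,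
    DiffBasis.setOf_le_upperDeriv hunc f⟩

/-- **Theorem (statement 17).** Let `B` be an uncentered differentiation basis in a metric
measure space `𝕏` consisting of either countably many sets or arbitrarily many open sets, and
let `f ∈ L^p(𝕏)` for some `p ∈ [1,∞]`. Then the upper and lower derivatives `f̄` and `f̲` are
measurable; in fact, for every `λ ∈ ℝ`,
`{x : f̄(x) ≥ λ} = ⋂ₙ ⋃_{S ∈ B_{λ,n}} S`, where `B_{λ,n}` consists of all `S ∈ B` with
`Avg_f(S) ≥ λ - 2⁻ⁿ` and `S ⊆ B(y, 2⁻ⁿ)` for some ball of radius `2⁻ⁿ`. -/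
theorem statement17 {X : Type*} [MetricSpace X] [MeasurableSpace X] [OpensMeasurableSpace X]
    {μ : Measure X} (B : DiffBasis μ) (hunc : B.Uncentered)
    (hsets : B.family.Countable ∨ ∀ S ∈ B.family, IsOpen S)
    (p : ℝ≥0∞) (hp : 1 ≤ p) (f : X → ℝ) (hf : MemLp f p μ) :
    Measurable (upperDeriv B.sets μ f) ∧ Measurable (lowerDeriv B.sets μ f) ∧
      ∀ l : ℝ, {x | (l : EReal) ≤ upperDeriv B.sets μ f x} =
        ⋂ n : ℕ, ⋃ S ∈ {S | S ∈ B.family ∧ l - 2⁻¹ ^ n ≤ ⨍ y in S, f y ∂μ ∧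
          ∃ y : X, S ⊆ Metric.ball y (2⁻¹ ^ n)}, S :=
  statement17_general B hunc hsets f
end

section
/- There exist a complete metric measure space 𝕏 = (X, ρ, μ) and an uncentered differentiation basis B in 𝕏 such that diff(B) = [1,∞); that is, B differentiates L^p(𝕏) for every p ∈ [1,∞) but B does not differentiate L^∞(𝕏). -/
/-- A (Borel) metric measure space, bundled. -/
structure MetricMeasureSpace where
  X : Type
  [metricX : MetricSpace X]
  [measurableX : MeasurableSpace X]
  [borelLE : OpensMeasurableSpace X]
  nonemptyX : Nonempty X
  μ : MeasureTheory.Measure X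

attribute [instance] MetricMeasureSpace.metricX MetricMeasureSpace.measurableX
  MetricMeasureSpace.borelLE MetricMeasureSpace.nonemptyX
open MeasureTheory Filter Metric Topology ENNReal

/-!
The measure is `μ = ν + #⌊ℚ`, where `ν A = 0` if `A` contains countably many irrationals and
`ν A = ∞` otherwise; the basis consists of the countable sets containing exactly one rational.
For such a set `S` with rational point `q`, `μ⌊S = δ_q`, so every average over `S` is `f q`.
If `f ∈ Lᵖ` with `p < ∞`, each superlevel set `{ε ≤ |f|}` has finite measure, so it contains
countably many irrationals and finitely many rationals: `f` vanishes at almost every irrational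
`x`, and `f q → 0` as rationals `q` tend to `x`. The indicator of the irrationals is bounded, but
all its averages vanish while it equals `1` on the non-null set of irrationals. Finally, null
sets are countable, hence Borel, so `μ` is complete.
-/

open Set
open scoped NNReal

theorem ContractsTo.tendsto_of_mem {X : Type*} [MetricSpace X] {Bx : X → Set (Set X)} {x : X}
    {S : ℕ → Set X} (hS : ContractsTo Bx x S) {y : ℕ → X} (hy : ∀ n, y n ∈ S n) :
    Tendsto y atTop (𝓝 x) := by
  obtain ⟨-, r, hr, hSr⟩ := hS
  rw [tendsto_iff_dist_tendsto_zero]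
  exact squeeze_zero (fun _ => dist_nonneg) (fun n => (hSr n (hy n)).le) hr

theorem contractsTo_pair {X : Type*} [MetricSpace X] {Bx : X → Set (Set X)} {x : X}
    {y : ℕ → X} (hy : Tendsto y atTop (𝓝 x)) (hB : ∀ n, {x, y n} ∈ Bx x) :
    ContractsTo Bx x fun n => {x, y n} := by
  refine ⟨hB, fun n => dist (y n) x + 1 / (n + 1), ?_, fun n z hz => ?_⟩
  · simpa using (tendsto_iff_dist_tendsto_zero.mp hy).add tendsto_one_div_add_atTop_nhds_zero_nat
  · have hpos : (0 : ℝ) < 1 / (n + 1) := by positivity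
    rcases hz with rfl | rfl
    · simpa using add_pos_of_nonneg_of_pos dist_nonneg hpos
    · exact lt_add_of_pos_right _ hpos

theorem tendsto_nhdsWithin_zero_of_finite_superlevelSets {α E : Type*} [TopologicalSpace α]
    [T1Space α] [SeminormedAddCommGroup E] {f : α → E} {T : Set α}
    (hf : ∀ ε : ℝ≥0, ε ≠ 0 → ({y | ε ≤ ‖f y‖₊} ∩ T).Finite) {x : α} (hx : x ∉ T) :
    Tendsto f (𝓝[T] x) (𝓝 0) := by
  rw [Metric.tendsto_nhds]
  intro ε hε
  lift ε to ℝ≥0 using hε.le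
  have hF : ({y | ε ≤ ‖f y‖₊} ∩ T)ᶜ ∈ 𝓝 x :=
    (hf ε (by exact_mod_cast hε.ne')).isClosed.compl_mem_nhds fun hx' => hx hx'.2
  filter_upwards [nhdsWithin_le_nhds hF, self_mem_nhdsWithin] with y hyF hyT
  rw [dist_zero_right, ← coe_nnnorm, NNReal.coe_lt_coe]
  exact lt_of_not_ge fun h => hyF ⟨h, hyT⟩

namespace MeasureTheory.Measure

variable {α : Type*} [MeasurableSpace α]

open Classical in
noncomputable def topOfUncountable (s : Set α) : Measure α :=
  ofMeasurable (fun A _ => if (A ∩ s).Countable then 0 else ∞) (by simp) fun A _ _ => by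
    by_cases h : ∀ i, (A i ∩ s).Countable
    · simp [iUnion_inter, countable_iUnion h, h]
    · push Not at h
      obtain ⟨i, hi⟩ := h
      have hU : ¬((⋃ i, A i) ∩ s).Countable := fun hc =>
        hi (hc.mono (inter_subset_inter_left _ (subset_iUnion A i)))
      rw [if_neg hU, eq_comm]
      exact ENNReal.tsum_eq_top_of_eq_top ⟨i, if_neg hi⟩

open Classical in
theorem topOfUncountable_apply [MeasurableSingletonClass α] {s : Set α} (hs : MeasurableSet s)
    (A : Set α) : topOfUncountable s A = if (A ∩ s).Countable then 0 else ∞ := by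
  split_ifs with hA
  -- `A ∩ s ∪ sᶜ` is a measurable superset of `A` with the same trace on `s`.
  · refine measure_mono_null (t := A ∩ s ∪ sᶜ) (fun x hx => ?_) ?_
    · by_cases hxs : x ∈ s
      exacts [Or.inl ⟨hx, hxs⟩, Or.inr hxs]
    · rw [topOfUncountable, ofMeasurable_apply _ (hA.measurableSet.union hs.compl), if_pos]
      simpa [union_inter_distrib_right, inter_assoc] using hA
  · rw [← measure_toMeasurable, topOfUncountable,
      ofMeasurable_apply _ (measurableSet_toMeasurable _ _), if_neg]
    exact fun h => hA (h.mono (inter_subset_inter_left _ (subset_toMeasurable _ _)))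

end MeasureTheory.Measure

namespace ExampleE1

open Measure

local notation "𝐐" => Set.range ((↑) : ℚ → ℝ)

theorem measurableSet_rat : MeasurableSet 𝐐 := (countable_range _).measurableSet

noncomputable def measure : Measure ℝ := topOfUncountable 𝐐ᶜ + count.restrict 𝐐

open Classical in
theorem measure_apply (A : Set ℝ) :
    measure A = (if (A \ 𝐐).Countable then 0 else ∞) + count (A ∩ 𝐐) := by
  rw [measure, add_apply, topOfUncountable_apply measurableSet_rat.compl,
    restrict_apply' measurableSet_rat, sdiff_eq]

theorem measure_lt_top_iff {A : Set ℝ} :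
    measure A < ∞ ↔ (A \ 𝐐).Countable ∧ (A ∩ 𝐐).Finite := by
  rw [measure_apply, ENNReal.add_lt_top, count_apply_lt_top]
  split_ifs with h <;> simp [h]

theorem countable_of_measure_eq_zero {A : Set ℝ} (hA : measure A = 0) : A.Countable := by
  rw [measure_apply, add_eq_zero] at hA
  have hAQ : (A \ 𝐐).Countable := by
    by_contra h
    simp [h] at hA
  exact (hAQ.union (countable_range _)).mono fun x hx => by
    by_cases h : x ∈ 𝐐
    exacts [Or.inr h, Or.inl ⟨hx, h⟩]

theorem measure_eq_zero {A : Set ℝ} (hA : A.Countable) (hAQ : Disjoint A 𝐐) : measure A = 0 := by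
  rw [measure_apply, if_pos (hA.mono sdiff_subset), hAQ.inter_eq, measure_empty, add_zero]

theorem measure_isComplete : measure.IsComplete :=
  ⟨fun _ hA => (countable_of_measure_eq_zero hA).measurableSet⟩

theorem measure_irrational_ne_zero : measure 𝐐ᶜ ≠ 0 := fun h =>
  Cardinal.not_countable_real <| by
    simpa using (countable_of_measure_eq_zero h).union (countable_range ((↑) : ℚ → ℝ))

theorem restrict_eq_dirac {S : Set ℝ} {q : ℝ} (hS : S.Countable) (hq : S ∩ 𝐐 = {q}) :
    measure.restrict S = dirac q := by
  have hnull : topOfUncountable 𝐐ᶜ S = 0 := by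
    rw [topOfUncountable_apply measurableSet_rat.compl, if_pos (hS.mono inter_subset_left)]
  rw [measure, restrict_add, restrict_eq_zero.mpr hnull, zero_add,
    restrict_restrict' measurableSet_rat, hq, restrict_singleton, count_singleton, one_smul]

def oneRationalSets : Set (Set ℝ) := {S | S.Countable ∧ ∃ q, S ∩ 𝐐 = {q}}

theorem measure_eq_one {S : Set ℝ} (hS : S ∈ oneRationalSets) : measure S = 1 := by
  obtain ⟨hSc, q, hq⟩ := hS
  rw [← restrict_apply_univ, restrict_eq_dirac hSc hq, measure_univ]

theorem setAverage_eq {S : Set ℝ} (hS : S ∈ oneRationalSets) {q : ℝ} (hq : q ∈ S ∩ 𝐐)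
    (f : ℝ → ℝ) : ⨍ y in S, f y ∂measure = f q := by
  obtain ⟨hSc, q', hq'⟩ := hS
  rw [hq', mem_singleton_iff] at hq
  subst hq
  rw [restrict_eq_dirac hSc hq', average_eq_integral, integral_dirac]

theorem pair_mem_oneRationalSets {x : ℝ} (q : ℚ) (hx : x ∈ 𝐐 → x = q) :
    {x, (q : ℝ)} ∈ oneRationalSets := by
  refine ⟨(countable_singleton _).insert x, q, ?_⟩
  ext y
  simp only [mem_inter_iff, mem_insert_iff, mem_singleton_iff]
  constructor
  · rintro ⟨rfl | rfl, hy⟩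
    exacts [hx hy, rfl]
  · rintro rfl
    exact ⟨Or.inr rfl, q, rfl⟩

def basisSets (x : ℝ) : Set (Set ℝ) := {S | S ∈ oneRationalSets ∧ x ∈ S}

theorem exists_contractsTo (x : ℝ) : ∃ S, ContractsTo basisSets x S := by
  by_cases hx : x ∈ 𝐐
  · obtain ⟨q, rfl⟩ := hx
    exact ⟨_, contractsTo_pair tendsto_const_nhds fun _ =>
      ⟨pair_mem_oneRationalSets q fun _ => rfl, mem_insert _ _⟩⟩
  · obtain ⟨u, -, -, hu⟩ := Real.exists_seq_rat_strictMono_tendsto x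
    exact ⟨_, contractsTo_pair hu fun n =>
      ⟨pair_mem_oneRationalSets (u n) (absurd · hx), mem_insert _ _⟩⟩

noncomputable def basis : DiffBasis measure where
  sets := basisSets
  measurableSet' _ _ hS := hS.1.1.measurableSet
  mem_of_mem _ _ hS := hS.2
  measure_pos _ _ hS := by simp [measure_eq_one hS.1]
  measure_lt_top _ _ hS := by simp [measure_eq_one hS.1]
  ae_contracts := ae_of_all _ exists_contractsTo

theorem basis_uncentered : basis.Uncentered := by
  intro x
  ext S
  refine ⟨fun hS => ⟨mem_iUnion.mpr ⟨x, hS⟩, hS.2⟩, fun ⟨hS, hx⟩ => ⟨?_, hx⟩⟩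
  obtain ⟨y, hy⟩ := mem_iUnion.mp hS
  exact hy.1

theorem exists_mem_rat_of_mem_basisSets {x : ℝ} {S : Set ℝ} (hS : S ∈ basisSets x) :
    ∃ q, q ∈ S ∩ 𝐐 := by
  obtain ⟨⟨-, q, hq⟩, -⟩ := hS
  exact ⟨q, hq ▸ rfl⟩

theorem tendsto_setAverage_of_irrational {f : ℝ → ℝ}
    (hf : ∀ ε : ℝ≥0, ε ≠ 0 → ({y | ε ≤ ‖f y‖₊} ∩ 𝐐).Finite) {x : ℝ} (hx : x ∉ 𝐐)
    {S : ℕ → Set ℝ} (hS : ContractsTo basisSets x S) :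
    Tendsto (fun n => ⨍ y in S n, f y ∂measure) atTop (𝓝 0) := by
  choose q hq using fun n => exists_mem_rat_of_mem_basisSets (hS.1 n)
  have hlim : Tendsto q atTop (𝓝[𝐐] x) := tendsto_nhdsWithin_iff.mpr
    ⟨hS.tendsto_of_mem fun n => (hq n).1, Eventually.of_forall fun n => (hq n).2⟩
  exact ((tendsto_nhdsWithin_zero_of_finite_superlevelSets hf hx).comp hlim).congr fun n =>
    (setAverage_eq (hS.1 n).1 (hq n) f).symm

theorem ae_eq_zero_of_irrational {f : ℝ → ℝ}
    (hf : ∀ ε : ℝ≥0, ε ≠ 0 → measure {y | ε ≤ ‖f y‖₊} < ∞) :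
    ∀ᵐ x ∂measure, x ∉ 𝐐 → f x = 0 := by
  refine ae_iff.mpr (measure_eq_zero ?_ ?_)
  · refine (countable_iUnion fun n : ℕ =>
      (measure_lt_top_iff.mp (hf (n + 1 : ℝ≥0)⁻¹ (by positivity))).1).mono fun x hx => ?_
    obtain ⟨hxQ, hfx⟩ := Classical.not_imp.mp hx
    obtain ⟨n, hn⟩ := exists_nat_one_div_lt (nnnorm_pos.mpr hfx)
    exact mem_iUnion.mpr ⟨n, by simpa using hn.le, hxQ⟩
  · exact disjoint_left.mpr fun x hx hxQ => (Classical.not_imp.mp hx).1 hxQ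

theorem differentiates {p : ℝ≥0∞} (hp0 : p ≠ 0) (hp : p ≠ ∞) : basis.Differentiates p := by
  intro f hf
  have hfin : ∀ ε : ℝ≥0, ε ≠ 0 → measure {y | ε ≤ ‖f y‖₊} < ∞ :=
    fun ε hε => hf.meas_ge_lt_top hp0 hp hε
  filter_upwards [ae_eq_zero_of_irrational hfin] with x hx S hS
  by_cases hxQ : x ∈ 𝐐
  · exact tendsto_const_nhds.congr fun n => (setAverage_eq (hS.1 n).1 ⟨(hS.1 n).2, hxQ⟩ f).symm
  · rw [hx hxQ]
    exact tendsto_setAverage_of_irrational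
      (fun ε hε => (measure_lt_top_iff.mp (hfin ε hε)).2) hxQ hS

theorem not_differentiates_top : ¬basis.Differentiates ∞ := by
  intro h
  have hf : MemLp (indicator 𝐐ᶜ (1 : ℝ → ℝ)) ∞ measure :=
    memLp_top_of_bound ((measurable_one.indicator measurableSet_rat.compl).aestronglyMeasurable) 1
      (ae_of_all _ fun x => by by_cases hx : x ∈ 𝐐 <;> simp [hx])
  refine measure_irrational_ne_zero (measure_mono_null (fun x hx => ?_) (ae_iff.mp
    ((h _ hf).and basis.ae_contracts)))
  rintro ⟨hlim, S, hS⟩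
  have havg_zero :
      Tendsto (fun n => ⨍ y in S n, indicator 𝐐ᶜ (1 : ℝ → ℝ) y ∂measure) atTop (𝓝 0) := by
    choose q hq using fun n => exists_mem_rat_of_mem_basisSets (hS.1 n)
    refine tendsto_const_nhds.congr fun n => ?_
    rw [eq_comm, setAverage_eq (hS.1 n).1 (hq n)]
    exact indicator_of_notMem (notMem_compl_iff.mpr (hq n).2) _
  simpa [hx] using tendsto_nhds_unique (hlim S hS) havg_zero

theorem diffSet_basis : basis.diffSet = Ico 1 ∞ := by
  ext p
  refine ⟨fun ⟨h1, hd⟩ => ⟨h1, lt_top_iff_ne_top.mpr ?_⟩, fun ⟨h1, h⟩ => ⟨h1, ?_⟩⟩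
  · rintro rfl
    exact not_differentiates_top hd
  · exact differentiates (one_pos.trans_le h1).ne' h.ne

end ExampleE1

/-- **Theorem (statement 18, Example E1).** There exist a complete metric measure space `𝕏`
and an uncentered differentiation basis `B` in `𝕏` such that `diff(B) = [1,∞)`: `B`
differentiates `L^p(𝕏)` for every `p ∈ [1,∞)` but not `L^∞(𝕏)`. -/
theorem statement18 :
    ∃ 𝕏 : MetricMeasureSpace, 𝕏.μ.IsComplete ∧
      ∃ B : DiffBasis 𝕏.μ, B.Uncentered ∧ B.diffSet = Set.Ico 1 ⊤ :=
  ⟨⟨ℝ, ⟨0⟩, ExampleE1.measure⟩, ExampleE1.measure_isComplete, ExampleE1.basis,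
    ExampleE1.basis_uncentered, ExampleE1.diffSet_basis⟩
end
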